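/- With ν defined as the integrated ratio ∫ Var(E[1{Y>t}|X])/Var(1{Y>t}) dμ̃(t), if Y and X are independent then ν(Y,X) = 0, and if Y = f(X) almost surely for some measurable f then ν(Y,X) = 1. -/

import Mathlib

open MeasureTheory ProbabilityTheory Classical

noncomputable section

/-- The indicator of the event `{Y > t}`. -/
def indGT {Ω : Type*} (Y : Ω → ℝ) (t : ℝ) : Ω → ℝ := fun ω => if Y ω > t then 1 else 0

/-- The (topological) support of a measure on `ℝ`: points all of whose neighbourhoods
have positive measure. -/
def msupport (ρ : Measure ℝ) : Set ℝ :=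
  {x | ∀ ε > (0 : ℝ), ρ (Set.Ioo (x - ε) (x + ε)) ≠ 0}

/-- `S̃`: the support with its maximum removed, if the support attains a maximum. -/
def tildeSet (ρ : Measure ℝ) : Set ℝ :=
  if h : ∃ m, IsGreatest (msupport ρ) m then msupport ρ \ {h.choose} else msupport ρ

/-- `μ̃`: the law `ρ` restricted to `S̃` and renormalized. -/
def tildeMeasure (ρ : Measure ℝ) : Measure ℝ :=
  (ρ (tildeSet ρ))⁻¹ • ρ.restrict (tildeSet ρ)

/-- The dependence measure
`ν(Y, X) = ∫ Var(E[1{Y > t} | X]) / Var(1{Y > t}) dμ̃(t)`,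
where the integrand is defined to be `1` whenever `Var(1{Y > t}) = 0`. -/
def nu {Ω : Type*} [MeasurableSpace Ω] (μ : Measure Ω) (Y : Ω → ℝ)
    {E : Type*} [MeasurableSpace E] (X : Ω → E) : ℝ :=
  ∫ t, (if variance (indGT Y t) μ = 0 then 1
        else variance (μ[indGT Y t | MeasurableSpace.comap X inferInstance]) μ
              / variance (indGT Y t) μ)
    ∂ tildeMeasure (Measure.map Y μ)

end

/-!
Under independence `E[1{Y > t} | X]` is a.s. the constant `P(Y > t)`, and when `Y = f(X)` it is
`1{Y > t}` itself, so the integrand of `ν` is `0`, resp. `1`, wherever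
`Var(1{Y > t}) = P(Y > t) P(Y ≤ t)` is nonzero. Removing the maximum of the support makes this
hold `μ̃`-a.e.: at a point `t` of the support other than its maximum `P(Y > t) > 0`, and
`P(Y ≤ t) = 0` happens on the support only at its least point, which then carries no mass.
Since `Y` is not a.s. constant, `μ̃` is a probability measure, so the integral of `1` is `1`.
-/

open Set Topology

section Support

variable {ρ : Measure ℝ}

lemma msupport_eq_support (ρ : Measure ℝ) : msupport ρ = ρ.support := by
  ext x
  rw [Metric.nhds_basis_ball.mem_measureSupport]
  simp only [msupport, mem_ofPred_eq, Real.ball_eq_Ioo, pos_iff_ne_zero]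

lemma measure_ne_zero_of_mem_msupport {x : ℝ} {s : Set ℝ} (hx : x ∈ msupport ρ)
    (hs : s ∈ 𝓝 x) : ρ s ≠ 0 :=
  ((Measure.mem_support_iff_forall x).1 (msupport_eq_support ρ ▸ hx) s hs).ne'

lemma mem_upperBounds_msupport_of_measure_Ioi_eq_zero {t : ℝ} (h : ρ (Ioi t) = 0) :
    t ∈ upperBounds (msupport ρ) :=
  fun _ hs => not_lt.1 fun hts => measure_ne_zero_of_mem_msupport hs (Ioi_mem_nhds hts) h

lemma mem_lowerBounds_msupport_of_measure_Iic_eq_zero {t : ℝ} (h : ρ (Iic t) = 0) :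
    t ∈ lowerBounds (msupport ρ) :=
  fun _ hs => not_lt.1 fun hst => measure_ne_zero_of_mem_msupport hs (Iic_mem_nhds hst) h

lemma tildeSet_subset_msupport (ρ : Measure ℝ) : tildeSet ρ ⊆ msupport ρ := by
  unfold tildeSet
  split_ifs
  exacts [sdiff_subset, subset_rfl]

lemma measurableSet_tildeSet (ρ : Measure ℝ) : MeasurableSet (tildeSet ρ) := by
  have hS : MeasurableSet (msupport ρ) :=
    (msupport_eq_support ρ ▸ Measure.isClosed_support).measurableSet
  unfold tildeSet
  split_ifs
  exacts [hS.diff (measurableSet_singleton _), hS]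

lemma not_isGreatest_msupport_of_mem_tildeSet {t : ℝ} (ht : t ∈ tildeSet ρ) :
    ¬ IsGreatest (msupport ρ) t := by
  intro hmax
  have hex : ∃ m, IsGreatest (msupport ρ) m := ⟨t, hmax⟩
  rw [tildeSet, dif_pos hex] at ht
  exact ht.2 (hmax.unique hex.choose_spec)

lemma measure_tildeSet_ne_zero [IsProbabilityMeasure ρ] (h : ¬ ∃ c, ∀ᵐ x ∂ρ, x = c) :
    ρ (tildeSet ρ) ≠ 0 := by
  intro h0
  have hS : ∀ᵐ x ∂ρ, x ∈ msupport ρ := msupport_eq_support ρ ▸ Measure.support_mem_ae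
  have hT : ∀ᵐ x ∂ρ, x ∉ tildeSet ρ := measure_eq_zero_iff_ae_notMem.1 h0
  unfold tildeSet at hT
  split_ifs at hT with hmax
  · refine h ⟨hmax.choose, ?_⟩
    filter_upwards [hS, hT] with x hxS hx
    by_contra hne
    exact hx ⟨hxS, hne⟩
  · obtain ⟨x, hxS, hx⟩ := (hS.and hT).exists
    exact hx hxS

lemma isProbabilityMeasure_tildeMeasure [IsProbabilityMeasure ρ]
    (h : ¬ ∃ c, ∀ᵐ x ∂ρ, x = c) : IsProbabilityMeasure (tildeMeasure ρ) := by
  constructor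
  rw [tildeMeasure, Measure.smul_apply, Measure.restrict_apply_univ, smul_eq_mul]
  exact ENNReal.inv_mul_cancel (measure_tildeSet_ne_zero h) (measure_ne_top ρ _)

lemma tildeMeasure_eq_zero_of_measure_inter {s : Set ℝ} (h : ρ (s ∩ tildeSet ρ) = 0) :
    tildeMeasure ρ s = 0 := by
  rw [tildeMeasure, Measure.smul_apply, Measure.restrict_apply' (measurableSet_tildeSet ρ), h,
    smul_zero]

lemma ae_tildeMeasure_measure_Ioi_ne_zero_and_measure_Iic_ne_zero :
    ∀ᵐ t ∂tildeMeasure ρ, ρ (Ioi t) ≠ 0 ∧ ρ (Iic t) ≠ 0 := by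
  rw [ae_iff]
  apply tildeMeasure_eq_zero_of_measure_inter
  set C := {t | IsLeast (msupport ρ) t ∧ ρ (Iic t) = 0}
  have hsub : {t | ¬(ρ (Ioi t) ≠ 0 ∧ ρ (Iic t) ≠ 0)} ∩ tildeSet ρ ⊆ C := by
    rintro t ⟨ht, htT⟩
    have htS := tildeSet_subset_msupport ρ htT
    rw [mem_ofPred_eq, not_and_or, not_not, not_not] at ht
    rcases ht with hIoi | hIic
    · exact absurd ⟨htS, mem_upperBounds_msupport_of_measure_Ioi_eq_zero hIoi⟩
        (not_isGreatest_msupport_of_mem_tildeSet htT)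
    · exact ⟨⟨htS, mem_lowerBounds_msupport_of_measure_Iic_eq_zero hIic⟩, hIic⟩
  refine measure_mono_null hsub ?_
  rcases C.eq_empty_or_nonempty with hC | ⟨m, hm⟩
  · rw [hC, measure_empty]
  · exact measure_mono_null (fun t ht => ht.1.2 hm.1.1) hm.2

end Support

section Indicator

lemma indGT_eq_indicator {Ω : Type*} (Y : Ω → ℝ) (t : ℝ) :
    indGT Y t = (Y ⁻¹' Ioi t).indicator 1 := by
  ext ω
  simp [indGT, indicator]

variable {Ω : Type*} [MeasurableSpace Ω] {μ : Measure Ω} {Y : Ω → ℝ}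

lemma measurable_indGT (hY : Measurable Y) (t : ℝ) : Measurable (indGT Y t) := by
  rw [indGT_eq_indicator]
  exact measurable_one.indicator (hY measurableSet_Ioi)

lemma memLp_indGT [IsFiniteMeasure μ] (hY : Measurable Y) (t : ℝ) (p : ENNReal) :
    MemLp (indGT Y t) p μ := by
  rw [indGT_eq_indicator]
  exact memLp_indicator_const p (hY measurableSet_Ioi) 1 (Or.inr (measure_ne_top μ _))

lemma variance_indGT [IsProbabilityMeasure μ] (hY : Measurable Y) (t : ℝ) :
    variance (indGT Y t) μ = (μ.map Y).real (Ioi t) * (μ.map Y).real (Iic t) := by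
  have : IsProbabilityMeasure (μ.map Y) := Measure.isProbabilityMeasure_map hY.aemeasurable
  have hsq : indGT Y t ^ 2 = indGT Y t := by
    ext ω
    simp only [Pi.pow_apply, indGT]
    split_ifs <;> norm_num
  have hmean : μ[indGT Y t] = (μ.map Y).real (Ioi t) := by
    rw [indGT_eq_indicator, integral_indicator_one (hY measurableSet_Ioi),
      map_measureReal_apply hY measurableSet_Ioi]
  rw [variance_eq_sub (memLp_indGT hY t 2), hsq, hmean, ← compl_Ioi,
    measureReal_compl measurableSet_Ioi, probReal_univ]
  ring

lemma variance_indGT_ne_zero [IsProbabilityMeasure μ] (hY : Measurable Y) {t : ℝ}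
    (hIoi : μ.map Y (Ioi t) ≠ 0) (hIic : μ.map Y (Iic t) ≠ 0) :
    variance (indGT Y t) μ ≠ 0 := by
  rw [variance_indGT hY]
  exact mul_ne_zero ((measureReal_ne_zero_iff (measure_ne_top _ _)).2 hIoi)
    ((measureReal_ne_zero_iff (measure_ne_top _ _)).2 hIic)

variable {E : Type*} [MeasurableSpace E] {X : Ω → E}

lemma condExp_indGT_ae_eq_integral_of_indepFun [IsProbabilityMeasure μ] (hY : Measurable Y)
    (hX : Measurable X) (hYX : IndepFun Y X μ) (t : ℝ) :
    μ[indGT Y t | MeasurableSpace.comap X inferInstance] =ᵐ[μ] fun _ => μ[indGT Y t] :=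
  condExp_indep_eq hY.comap_le hX.comap_le
    ((measurable_indGT measurable_id t).comp (comap_measurable Y)).stronglyMeasurable
    ((IndepFun_iff_Indep Y X μ).1 hYX)

lemma condExp_indGT_ae_eq_self_of_ae_eq_comp [IsFiniteMeasure μ] (hY : Measurable Y)
    (hX : Measurable X) {f : E → ℝ} (hf : Measurable f) (hYf : Y =ᵐ[μ] f ∘ X) (t : ℝ) :
    μ[indGT Y t | MeasurableSpace.comap X inferInstance] =ᵐ[μ] indGT Y t := by
  have hcomp : indGT Y t =ᵐ[μ] indGT f t ∘ X := by
    filter_upwards [hYf] with ω hω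
    simp only [indGT, hω, Function.comp_apply]
  exact condExp_of_aestronglyMeasurable' hX.comap_le
    ⟨_, ((measurable_indGT hf t).comp (comap_measurable X)).stronglyMeasurable, hcomp⟩
    ((memLp_indGT hY t 1).integrable le_rfl)

end Indicator

/-- If `Y` and `X` are independent then `ν(Y,X) = 0`, and if `Y = f(X)` a.s. for some
measurable `f` then `ν(Y,X) = 1`. -/
theorem stmt_4 {Ω : Type*} [MeasurableSpace Ω] (μ : Measure Ω) [IsProbabilityMeasure μ]
    {p : ℕ} (Y : Ω → ℝ) (X : Ω → EuclideanSpace ℝ (Fin p))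
    (hY : Measurable Y) (hX : Measurable X)
    (hconst : ¬ ∃ c : ℝ, ∀ᵐ ω ∂μ, Y ω = c) :
    (IndepFun Y X μ → nu μ Y X = 0) ∧
    ((∃ f : EuclideanSpace ℝ (Fin p) → ℝ, Measurable f ∧ Y =ᵐ[μ] fun ω => f (X ω)) →
      nu μ Y X = 1) := by
  have : IsProbabilityMeasure (μ.map Y) := Measure.isProbabilityMeasure_map hY.aemeasurable
  have : IsProbabilityMeasure (tildeMeasure (μ.map Y)) :=
    isProbabilityMeasure_tildeMeasure <| by
      simpa only [ae_map_iff hY.aemeasurable measurableSet_eq] using hconst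
  constructor
  · intro hYX
    refine integral_eq_zero_of_ae ?_
    filter_upwards [ae_tildeMeasure_measure_Ioi_ne_zero_and_measure_Iic_ne_zero] with t ht
    rw [if_neg (variance_indGT_ne_zero hY ht.1 ht.2),
      variance_congr (condExp_indGT_ae_eq_integral_of_indepFun hY hX hYX t)]
    simp [variance_eq_integral aemeasurable_const]
  · rintro ⟨f, hf, hYf⟩
    unfold nu
    simp_rw [fun t => variance_congr (condExp_indGT_ae_eq_self_of_ae_eq_comp hY hX hf hYf t)]
    simp +contextual
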